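/- For every ξ ∈ ℝ³, the number of pairs (n,p) for which there exist k, l, j, i with ξ ∈ Γ^δ_{kjn} + Γ^δ_{lip} is at most 3/β. -/
import Mathlib


open MeasureTheory Set
open scoped FourierTransform ENNReal Pointwise

noncomputable section

/-- `γ = δ^{1/m}`. -/
def gam (m : ℕ) (δ : ℝ) : ℝ := δ ^ ((1 : ℝ) / m)

/-- Number of dyadic blocks: `⌈log₂(1/γ)⌉`. -/
def Kmax (m : ℕ) (δ : ℝ) : ℕ := ⌈Real.logb 2 (1 / gam m δ)⌉₊

/-- Size `⌈2^{km/2}⌉` of the index set `I_k`. -/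
def Jmax (m k : ℕ) : ℕ := ⌈(2 : ℝ) ^ ((k * m : ℝ) / 2)⌉₊

/-- `γ_k = 2^{k(1-m/2)} γ`. -/
def gamk (m : ℕ) (δ : ℝ) (k : ℕ) : ℝ := 2 ^ ((k : ℝ) * (1 - (m : ℝ) / 2)) * gam m δ

/-- `x_{kj} = (2^k - 1)γ + j γ_k` (allowing negative `j` for shifted boxes). -/
def xkj (m : ℕ) (δ : ℝ) (k : ℕ) (j : ℤ) : ℝ :=
  ((2 : ℝ) ^ k - 1) * gam m δ + (j : ℝ) * gamk m δ k

/-- The piece `Γ^δ_{kjn}` of the decomposition of the thickened cone. -/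
def GammaSet (m : ℕ) (Φ : ℝ → ℝ) (δ β : ℝ) (k : ℕ) (j n : ℤ) :
    Set (EuclideanSpace ℝ (Fin 3)) :=
  {v | (n : ℝ) * β ≤ v 2 ∧ v 2 ≤ ((n : ℝ) + 1) * β ∧
       Φ (v 0 / v 2) ≤ v 1 / v 2 ∧ v 1 / v 2 ≤ Φ (v 0 / v 2) + δ ∧
       xkj m δ k j ≤ v 0 ∧ v 0 < xkj m δ k (j + 1)}

/-- Admissibility of a multi-index `(k,j,n)`, where `β = 1/N`. -/
def idxOK (m : ℕ) (δ : ℝ) (N : ℕ) (k j n : ℕ) : Prop :=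
  k < Kmax m δ ∧ j < Jmax m k ∧ N ≤ n ∧ n ≤ 2 * N - 1

/-- The finite set of admissible multi-indices `α = (k,j,n)`. -/
def idxFinset (m : ℕ) (δ : ℝ) (N : ℕ) : Finset (ℕ × ℕ × ℕ) :=
  (Finset.range (Kmax m δ) ×ˢ Finset.range (Jmax m (Kmax m δ)) ×ˢ
      Finset.Icc N (2 * N - 1)).filter fun t => t.2.1 < Jmax m t.1

/-- The structural hypotheses on the finite type model curve `Φ`. -/
def PhiHyp (m : ℕ) (Φ : ℝ → ℝ) : Prop :=
  (∃ χ χ₁ χ₂ : ℝ → ℝ,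
    ContDiffOn ℝ 2 χ (Icc 0 1) ∧ ContDiffOn ℝ 1 χ₁ (Icc 0 1) ∧
    ContinuousOn χ₂ (Icc 0 1) ∧
    ∀ x ∈ Icc (0:ℝ) 1, 0 < χ x ∧ 0 < χ₁ x ∧ 0 < χ₂ x ∧
      Φ x = x ^ m * χ x ∧ deriv Φ x = x ^ (m - 1) * χ₁ x ∧
      deriv (deriv Φ) x = x ^ (m - 2) * χ₂ x) ∧
  ∀ k ≤ m, ∀ x ∈ Ioc (0:ℝ) 1, 0 < iteratedDeriv k Φ x

/-- The bump function `φ_{kjn}` adapted to `Γ^δ_{kjn}`. -/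
def phiBump (m : ℕ) (Φ η : ℝ → ℝ) (δ β : ℝ) (α : ℕ × ℕ × ℕ)
    (v : EuclideanSpace ℝ (Fin 3)) : ℝ :=
  η ((v 0 - xkj m δ α.1 (α.2.1 : ℤ)) / gamk m δ α.1) *
    η ((v 1 - v 2 * Φ (v 0 / v 2)) / δ) * η ((v 2 - (α.2.2 : ℝ) * β) / β)

/-- Hypotheses on the bump profile `η`: smooth, compactly supported, and
`χ_{[-1,1]} ≤ η ≤ χ_{[-5/4,5/4]}`. -/
def EtaHyp (η : ℝ → ℝ) : Prop :=
  ContDiff ℝ (⊤ : ℕ∞) η ∧ HasCompactSupport η ∧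
    ∀ x : ℝ, indicator (Icc (-1 : ℝ) 1) (fun _ => (1:ℝ)) x ≤ η x ∧
      η x ≤ indicator (Icc (-5/4 : ℝ) (5/4)) (fun _ => (1:ℝ)) x

/-- The enlarged set `G^δ_{kjn}`, a union of shifted neighbours of `Γ^δ_{kjn}`. -/
def Gset (m : ℕ) (Φ : ℝ → ℝ) (δ β : ℝ) (k : ℕ) (j n : ℤ) :
    Set (EuclideanSpace ℝ (Fin 3)) :=
  ⋃ u ∈ ({-1, 0, 1} : Set ℤ), ⋃ v ∈ ({-1, 0, 1} : Set ℤ), ⋃ w ∈ ({-1, 0, 1} : Set ℤ),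
    (fun q => (EuclideanSpace.equiv (Fin 3) ℝ).symm ![0, (v : ℝ) * δ, 0] + q) ''
      GammaSet m Φ δ β k (j + u) (n + w)

/-- The Lorentz `L^{p,1}` quasinorm, via the distribution function. -/
def lorentzNorm (p : ℝ) (f : EuclideanSpace ℝ (Fin 3) → ℝ) : ℝ≥0∞ :=
  ∫⁻ t in Ioi (0 : ℝ), (volume {x | t < |f x|}) ^ (1 / p)

end

/-- Overlap in the `z`-direction: for every `ξ ∈ ℝ³`, the number of pairs `(n,p)` for which
there are admissible `k, l, j, i` with `ξ ∈ Γ^δ_{kjn} + Γ^δ_{lip}` is at most `3/β = 3N`. -/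
theorem statement7 (m : ℕ) (hm : 3 ≤ m) (Φ : ℝ → ℝ) (hΦ : PhiHyp m Φ)
    (δ : ℝ) (hδ0 : 0 < δ) (hδ1 : δ < 1) (N : ℕ) (hN : 0 < N) (hβδ : ((N : ℝ))⁻¹ < δ)
    (ξ : EuclideanSpace ℝ (Fin 3)) :
    {np : ℕ × ℕ | ∃ k l j i : ℕ, idxOK m δ N k j np.1 ∧ idxOK m δ N l i np.2 ∧
        ξ ∈ GammaSet m Φ δ ((N : ℝ))⁻¹ k (j : ℤ) (np.1 : ℤ) +
              GammaSet m Φ δ ((N : ℝ))⁻¹ l (i : ℤ) (np.2 : ℤ)}.Finite ∧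
      {np : ℕ × ℕ | ∃ k l j i : ℕ, idxOK m δ N k j np.1 ∧ idxOK m δ N l i np.2 ∧
        ξ ∈ GammaSet m Φ δ ((N : ℝ))⁻¹ k (j : ℤ) (np.1 : ℤ) +
              GammaSet m Φ δ ((N : ℝ))⁻¹ l (i : ℤ) (np.2 : ℤ)}.ncard ≤ 3 * N := by
  set β : ℝ := ((N : ℝ))⁻¹ with hβ
  have hN0 : (0 : ℝ) < N := by exact_mod_cast hN
  have hβ0 : 0 < β := by positivity
  set M := ⌊ξ 2 * N⌋₊ with hM
  set F : Finset (ℕ × ℕ) :=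
    (Finset.Icc (M - 2) M ×ˢ Finset.Icc N (2 * N - 1)).image fun q => (q.2, q.1 - q.2)
    with hF
  have hsub : {np : ℕ × ℕ | ∃ k l j i : ℕ, idxOK m δ N k j np.1 ∧ idxOK m δ N l i np.2 ∧
        ξ ∈ GammaSet m Φ δ β k (j : ℤ) (np.1 : ℤ) +
              GammaSet m Φ δ β l (i : ℤ) (np.2 : ℤ)} ⊆ ↑F := by
    rintro ⟨n, p⟩ ⟨k, l, j, i, hk, hl, hmem⟩
    obtain ⟨a, ha, b, hb, hab⟩ := hmem
    obtain ⟨ha1, ha2, -, -, -, -⟩ := ha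
    obtain ⟨hb1, hb2, -, -, -, -⟩ := hb
    push_cast at ha1 ha2 hb1 hb2
    have hxi2 : ξ 2 = a 2 + b 2 := by rw [← hab]; rfl
    have hlow : ((n : ℝ) + p) * β ≤ ξ 2 := by rw [hxi2]; nlinarith
    have hhigh : ξ 2 ≤ ((n : ℝ) + p + 2) * β := by rw [hxi2]; nlinarith
    have hβN : β * (N : ℝ) = 1 := inv_mul_cancel₀ (ne_of_gt hN0)
    have hlow' : ((n : ℝ) + p) ≤ ξ 2 * N := by
      have := mul_le_mul_of_nonneg_right hlow hN0.le
      calc ((n : ℝ) + p) = ((n : ℝ) + p) * (β * N) := by rw [hβN]; ring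
        _ = ((n : ℝ) + p) * β * N := by ring
        _ ≤ ξ 2 * N := this
    have hhigh' : ξ 2 * N ≤ ((n : ℝ) + p + 2) := by
      have := mul_le_mul_of_nonneg_right hhigh hN0.le
      calc ξ 2 * N ≤ ((n : ℝ) + p + 2) * β * N := this
        _ = ((n : ℝ) + p + 2) * (β * N) := by ring
        _ = ((n : ℝ) + p + 2) := by rw [hβN]; ring
    have h1 : n + p ≤ M := by
      apply Nat.le_floor
      push_cast
      exact hlow'
    have h2 : M ≤ n + p + 2 := by
      have : M ≤ ⌊((n + p + 2 : ℕ) : ℝ)⌋₊ := by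
        apply Nat.floor_mono
        push_cast
        exact hhigh'
      rwa [Nat.floor_natCast] at this
    obtain ⟨-, -, hn1, hn2⟩ := hk
    obtain ⟨-, -, hp1, hp2⟩ := hl
    simp only [hF, Finset.coe_image, Set.mem_image, Finset.mem_coe, Finset.mem_product,
      Finset.mem_Icc]
    exact ⟨(n + p, n), ⟨⟨by omega, h1⟩, hn1, hn2⟩, by simp⟩
  refine ⟨Set.Finite.subset F.finite_toSet hsub, ?_⟩
  calc _ ≤ F.card := by
        rw [← Set.ncard_coe_finset]
        exact Set.ncard_le_ncard hsub F.finite_toSet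
    _ ≤ (Finset.Icc (M - 2) M ×ˢ Finset.Icc N (2 * N - 1)).card := Finset.card_image_le
    _ = (Finset.Icc (M - 2) M).card * (Finset.Icc N (2 * N - 1)).card := Finset.card_product _ _
    _ ≤ 3 * N := by
        rw [Nat.card_Icc, Nat.card_Icc]
        exact Nat.mul_le_mul (by omega) (by omega)
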